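/- Let A be an assembly with at least one non-conflicting realization, and let S_u(A) be the set of scaffolds that appear in A but whose orientation is not specified in any assembly point of A, in the setting where OG(A) is non-branching (every scaffold in at most two points) and every two points sharing a scaffold are non-conflicting or semi-conflicting. Then the number of non-conflicting realizations of A equals 2^{|S_u(A)|}. -/

import Mathlib

/-- An assembly point: two scaffolds with partial orientation data
(`none` = unoriented, `some b` = oriented, `true` = forward). -/
structure APoint (S : Type) where
  s1 : S
  s2 : S
  o1 : Option Bool
  o2 : Option Bool
deriving DecidableEq

/-- A global orientation `σ` extends (is consistent with) the partial data of `p`. -/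
def APoint.extends' {S : Type} (σ : S → Bool) (p : APoint S) : Prop :=
  (∀ b, p.o1 = some b → σ p.s1 = b) ∧ (∀ b, p.o2 = some b → σ p.s2 = b)

/-- The extremity of its left scaffold used by a point realized via `σ`
(head `(s, true)` if `s` is forward). -/
def APoint.usedL {S : Type} (σ : S → Bool) (p : APoint S) : S × Bool := (p.s1, σ p.s1)

/-- The extremity of its right scaffold used by a point realized via `σ`
(tail `(s, false)` if `s` is forward). -/
def APoint.usedR {S : Type} (σ : S → Bool) (p : APoint S) : S × Bool := (p.s2, !σ p.s2)

/-- Two realized points use disjoint sets of extremities (are non-conflicting). -/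
def APoint.disj {S : Type} (τ τ' : S → Bool) (p q : APoint S) : Prop :=
  p.usedL τ ≠ q.usedL τ' ∧ p.usedL τ ≠ q.usedR τ' ∧
  p.usedR τ ≠ q.usedL τ' ∧ p.usedR τ ≠ q.usedR τ'

/-- `σ` is a non-conflicting realization of the assembly `A`: it extends the partial
orientation data of every point, and every scaffold extremity is used at most once. -/
def NCR {S : Type} (A : Finset (APoint S)) (σ : S → Bool) : Prop :=
  (∀ p ∈ A, p.extends' σ) ∧
  (∀ p ∈ A, p.usedL σ ≠ p.usedR σ) ∧
  (∀ p ∈ A, ∀ q ∈ A, p ≠ q → APoint.disj σ σ p q)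

/-!
The non-conflicting conditions do not depend on the orientation at all: two extremities on the
same side of their points coincide iff the scaffolds do, and a left extremity `(s, σ s)` never
equals a right one `(s, !σ s)`. So a realization is non-conflicting as soon as it extends the
partial orientations, provided one non-conflicting realization exists. The partial orientations
fix every scaffold outside `S_u(A)` and constrain nothing inside it, whence a bijection between
non-conflicting realizations and `S_u(A) → Bool`.
-/

namespace APoint

variable {S : Type} (σ : S → Bool) (p q : APoint S)

theorem usedL_eq_usedL_iff : p.usedL σ = q.usedL σ ↔ p.s1 = q.s1 := by
  simp only [usedL, Prod.mk.injEq, and_iff_left_iff_imp]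
  exact fun h => h ▸ rfl

theorem usedR_eq_usedR_iff : p.usedR σ = q.usedR σ ↔ p.s2 = q.s2 := by
  simp only [usedR, Prod.mk.injEq, and_iff_left_iff_imp]
  exact fun h => h ▸ rfl

theorem usedL_ne_usedR : p.usedL σ ≠ q.usedR σ := by
  simp only [usedL, usedR, ne_eq, Prod.mk.injEq, not_and]
  intro h
  rw [h]
  exact Bool.not_ne_self _ ∘ Eq.symm

theorem disj_iff : disj σ σ p q ↔ p.s1 ≠ q.s1 ∧ p.s2 ≠ q.s2 := by
  simp only [disj, ne_eq, usedL_eq_usedL_iff, usedR_eq_usedR_iff, usedL_ne_usedR,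
    (usedL_ne_usedR σ q p).symm, not_false_eq_true, true_and]

end APoint

section

variable {S : Type} {A : Finset (APoint S)}

theorem ncr_iff {σ : S → Bool} :
    NCR A σ ↔ (∀ p ∈ A, p.extends' σ) ∧
      ∀ p ∈ A, ∀ q ∈ A, p ≠ q → p.s1 ≠ q.s1 ∧ p.s2 ≠ q.s2 := by
  simp only [NCR, APoint.usedL_ne_usedR, ne_eq, not_false_eq_true, implies_true, true_and,
    APoint.disj_iff]

theorem NCR.of_extends {σ₀ σ : S → Bool} (h₀ : NCR A σ₀) (hσ : ∀ p ∈ A, p.extends' σ) :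
    NCR A σ :=
  ncr_iff.2 ⟨hσ, (ncr_iff.1 h₀).2⟩

/-- `s ∈ S_u(A)`. -/
def IsUnoriented (A : Finset (APoint S)) (s : S) : Prop :=
  ∀ p ∈ A, (p.s1 = s → p.o1 = none) ∧ (p.s2 = s → p.o2 = none)

theorem eq_of_not_isUnoriented {σ τ : S → Bool} (hσ : ∀ p ∈ A, p.extends' σ)
    (hτ : ∀ p ∈ A, p.extends' τ) {s : S} (hs : ¬IsUnoriented A s) : σ s = τ s := by
  by_contra hne
  refine hs fun p hp => ⟨?_, ?_⟩
  · rintro rfl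
    cases ho : p.o1 with
    | none => rfl
    | some b => exact absurd (((hσ p hp).1 b ho).trans ((hτ p hp).1 b ho).symm) hne
  · rintro rfl
    cases ho : p.o2 with
    | none => rfl
    | some b => exact absurd (((hσ p hp).2 b ho).trans ((hτ p hp).2 b ho).symm) hne

theorem extends'_of_eqOn_not_isUnoriented {σ₀ σ : S → Bool} (h₀ : ∀ p ∈ A, p.extends' σ₀)
    (hσ : ∀ s, ¬IsUnoriented A s → σ s = σ₀ s) : ∀ p ∈ A, p.extends' σ := by
  intro p hp
  have oriented_s1 : ∀ b, p.o1 = some b → ¬IsUnoriented A p.s1 :=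
    fun b hb hu => Option.some_ne_none b (hb ▸ (hu p hp).1 rfl)
  have oriented_s2 : ∀ b, p.o2 = some b → ¬IsUnoriented A p.s2 :=
    fun b hb hu => Option.some_ne_none b (hb ▸ (hu p hp).2 rfl)
  exact ⟨fun b hb => (hσ _ (oriented_s1 b hb)).trans ((h₀ p hp).1 b hb),
    fun b hb => (hσ _ (oriented_s2 b hb)).trans ((h₀ p hp).2 b hb)⟩

open Classical in
noncomputable def ncrEquivUnoriented {σ₀ : S → Bool} (h₀ : NCR A σ₀) :
    {σ : S → Bool // NCR A σ} ≃ ({s // IsUnoriented A s} → Bool) where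
  toFun σ s := σ.1 s
  invFun f := ⟨fun s => if h : IsUnoriented A s then f ⟨s, h⟩ else σ₀ s,
    h₀.of_extends <| extends'_of_eqOn_not_isUnoriented h₀.1 fun _ hs => dif_neg hs⟩
  left_inv := by
    rintro ⟨σ, hσ⟩
    ext s
    by_cases h : IsUnoriented A s
    · simp only [dif_pos h]
    · simp only [dif_neg h]
      exact eq_of_not_isUnoriented h₀.1 hσ.1 h
  right_inv f := funext fun s => dif_pos s.2

end

theorem card_nonconflicting_realizations_general {S : Type} [Fintype S] [DecidableEq S]
    (A : Finset (APoint S))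
    (hex : ∃ σ : S → Bool, NCR A σ) :
    Nat.card {σ : S → Bool // NCR A σ} =
      2 ^ (Finset.univ.filter (fun s : S =>
        ∀ p ∈ A, (p.s1 = s → p.o1 = none) ∧ (p.s2 = s → p.o2 = none))).card := by
  obtain ⟨σ₀, h₀⟩ := hex
  rw [Nat.card_congr (ncrEquivUnoriented h₀), Nat.card_fun, Nat.card_eq_fintype_card (α := Bool),
    Fintype.card_bool, ← Nat.card_eq_finsetCard]
  exact congrArg _ <| Nat.card_congr <| Equiv.subtypeEquivRight fun s => by simp [IsUnoriented]

/-- for an assembly `A` with at least one non-conflicting realization,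
in the non-branching setting (every scaffold in at most two points), where every
scaffold occurs in some point of `A`, the number of non-conflicting realizations of `A`
equals `2 ^ |S_u(A)|`, where `S_u(A)` is the set of scaffolds whose orientation is not
specified in any assembly point of `A` containing them. -/
theorem card_nonconflicting_realizations {S : Type} [Fintype S] [DecidableEq S]
    (A : Finset (APoint S))
    (hss : ∀ p ∈ A, p.s1 ≠ p.s2)
    (hall : ∀ s : S, ∃ p ∈ A, p.s1 = s ∨ p.s2 = s)
    (hdeg : ∀ s : S, (A.filter (fun p => p.s1 = s ∨ p.s2 = s)).card ≤ 2)
    (hex : ∃ σ : S → Bool, NCR A σ) :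
    Nat.card {σ : S → Bool // NCR A σ} =
      2 ^ (Finset.univ.filter (fun s : S =>
        ∀ p ∈ A, (p.s1 = s → p.o1 = none) ∧ (p.s2 = s → p.o2 = none))).card :=
  card_nonconflicting_realizations_general A hex
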